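/- For integers a, b, k with k ≥ b > a ≥ 1 and m ≥ 1: Σ_{λ ∈ BR'_{a,b,k}(m)} u^{ℓ_a(λ)} v^{ℓ_b(λ)} q^{|λ|} = Σ_{h=0}^{m} u^{h} v^{m−h} q^{mb + k·C(h,2) + (a−b)h} [m choose h]_k. -/

import Mathlib

/-!
A partition in `BR'_{a,b,k}(m)` is determined by the word of residues of its parts. Reading
upwards from the smallest part, which is `a` or `b`, the gap conditions leave exactly one
choice for the next part of each residue: the part of letter `c` is `c + k t`, where `t`
counts the parts `≡ a` from it down to, but excluding, the smallest one. So the partitions are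
in bijection with words over `{a, b}` of length `m`, and the weight `u^{ℓ_a} v^{ℓ_b} q^{|λ|}`
factorises letter by letter: the generating function is `∏_{i<m} (v q^b + u q^{a+ki})`.
Cauchy's `q`-binomial theorem `∏_{i<m} (V + U x^i) = Σ_h U^h V^{m-h} x^{C(h,2)} [m, h]_x`
finishes the proof.
-/

/-- The finite q-Pochhammer symbol `(t;q)_n = ∏_{i=0}^{n-1} (1 - t qⁱ)`. -/
noncomputable def qPoch (t q : ℂ) (n : ℕ) : ℂ := ∏ i ∈ Finset.range n, (1 - t * q ^ i)

/-- The infinite q-Pochhammer symbol `(t;q)_∞ = ∏_{i≥0} (1 - t qⁱ)`. -/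
noncomputable def qPochInf (t q : ℂ) : ℂ := ∏' i : ℕ, (1 - t * q ^ i)

/-- The Gaussian binomial coefficient `[A choose B]` in base `q`:
`(q;q)_A / ((q;q)_B (q;q)_{A-B})` for `A ≥ B ≥ 0`, and `0` otherwise. -/
noncomputable def gbinom (q : ℂ) (A B : ℕ) : ℂ :=
  if B ≤ A then qPoch q q A / (qPoch q q B * qPoch q q (A - B)) else 0

/-- `lcount k c l` is the number of parts of `l` congruent to `c` modulo `k`. -/
def lcount (k c : ℕ) (l : List ℕ) : ℕ := (l.filter (fun x => x % k = c % k)).length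

/-- Membership in `BR'_{a,b,k}(m)`: partitions `(λ_1,…,λ_m)` with exactly `m` parts, each
`≡ a` or `b (mod k)`, only parts `≡ b (mod k)` possibly repeated, `λ_m ∈ {a, b}`, and for
consecutive parts `λ_i - λ_{i+1} ≤ k` with strict inequality if `λ_{i+1} ≡ b (mod k)`. -/
def memBR' (a b k m : ℕ) (l : List ℕ) : Prop :=
  l.Pairwise (· ≥ ·) ∧ l.length = m ∧
    (∀ x ∈ l, 0 < x ∧ (x % k = a % k ∨ x % k = b % k)) ∧
    (∀ x : ℕ, x % k = a % k → l.count x ≤ 1) ∧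
    (l.getLast? = some a ∨ l.getLast? = some b) ∧
    l.Chain' (fun x y => x ≤ y + k ∧ (y % k = b % k → x < y + k))

theorem Nat.exists_eq_add_mul_of_mod_eq {r k x : ℕ} (hrk : r ≤ k) (hx : 0 < x)
    (h : x % k = r % k) : ∃ s, x = r + k * s := by
  have hrx : r ≤ x := by
    rcases hrk.lt_or_eq with hrk | rfl
    · rw [Nat.mod_eq_of_lt hrk] at h
      exact h ▸ Nat.mod_le x k
    · rw [Nat.mod_self] at h
      exact Nat.le_of_dvd hx (Nat.dvd_of_mod_eq_zero h)
  obtain ⟨s, hs⟩ := (Nat.modEq_iff_dvd' hrx).mp h.symm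
  exact ⟨s, by omega⟩

theorem Nat.eq_of_mul_lt_mul_add {k s t : ℕ} (h₁ : k * s < k * t + k)
    (h₂ : k * t < k * s + k) : s = t := by
  rw [← Nat.mul_succ] at h₁ h₂
  have := Nat.lt_of_mul_lt_mul_left h₁
  have := Nat.lt_of_mul_lt_mul_left h₂
  omega

section Residues

variable {a b k : ℕ}

theorem mod_ne_mod_of_lt (ha : 1 ≤ a) (hab : a < b) (hbk : b ≤ k) : a % k ≠ b % k := by
  rw [Nat.mod_eq_of_lt (hab.trans_le hbk)]
  rcases hbk.lt_or_eq with hbk | rfl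
  · rw [Nat.mod_eq_of_lt hbk]; omega
  · rw [Nat.mod_self]; omega

theorem cond_add_mul_mod_eq_left_iff (ha : 1 ≤ a) (hab : a < b) (hbk : b ≤ k) (c : Bool)
    (t : ℕ) : (cond c a b + k * t) % k = a % k ↔ c = true := by
  have := mod_ne_mod_of_lt ha hab hbk
  cases c <;> simp [Nat.add_mul_mod_self_left, this.symm]

theorem cond_add_mul_mod_eq_right_iff (ha : 1 ≤ a) (hab : a < b) (hbk : b ≤ k) (c : Bool)
    (t : ℕ) : (cond c a b + k * t) % k = b % k ↔ c = false := by
  have := mod_ne_mod_of_lt ha hab hbk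
  cases c <;> simp [Nat.add_mul_mod_self_left, this]

def BRStep (a b k x y : ℕ) : Prop :=
  0 < x ∧ (x % k = a % k ∨ x % k = b % k) ∧ y ≤ x ∧ (x % k = a % k → y < x) ∧
    x ≤ y + k ∧ (y % k = b % k → x < y + k)

theorem brStep_iff (ha : 1 ≤ a) (hab : a < b) (hbk : b ≤ k) {x : ℕ} (c' : Bool) (t : ℕ) :
    BRStep a b k x (cond c' a b + k * t) ↔ ∃ c : Bool, x = cond c a b + k * (t + c.toNat) := by
  simp only [BRStep, cond_add_mul_mod_eq_right_iff ha hab hbk]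
  constructor
  · rintro ⟨hx, hres, hyx, hya, hxy, hyb⟩
    -- writing `x = c + k * s`, the inequalities trap `k * s` strictly within `k` of
    -- `k * (t + c.toNat)`
    rcases hres with hxa | hxb
    · obtain ⟨s, rfl⟩ := Nat.exists_eq_add_mul_of_mod_eq (by omega) hx hxa
      refine ⟨true, ?_⟩
      have hlt := hya hxa
      suffices s = t + 1 by subst this; rfl
      apply Nat.eq_of_mul_lt_mul_add (k := k) <;> rw [Nat.mul_succ] <;> cases c' <;>
        simp only [cond_true, cond_false, Bool.true_eq_false, false_implies, true_implies]
          at hyx hxy hyb hlt <;> omega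
    · obtain ⟨s, rfl⟩ := Nat.exists_eq_add_mul_of_mod_eq hbk hx hxb
      refine ⟨false, ?_⟩
      suffices s = t by subst this; rfl
      apply Nat.eq_of_mul_lt_mul_add (k := k) <;> cases c' <;>
        simp only [cond_true, cond_false, Bool.true_eq_false, false_implies, true_implies]
          at hyx hxy hyb <;> omega
  · rintro ⟨c, rfl⟩
    simp only [cond_add_mul_mod_eq_left_iff ha hab hbk]
    cases c <;> cases c' <;> simp [Nat.mul_add] <;> omega

end Residues

theorem memBR'_singleton {a b k x : ℕ} (ha : 1 ≤ a) (hab : a < b) :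
    memBR' a b k 1 [x] ↔ x = a ∨ x = b := by
  simp only [memBR', List.pairwise_singleton, List.length_singleton, List.mem_singleton,
    forall_eq, List.getLast?_singleton, Option.some.injEq, true_and]
  refine ⟨fun h => h.2.2.1, fun h => ⟨?_, fun y _ => by grind [List.count_singleton], h,
    List.isChain_singleton x⟩⟩
  rcases h with rfl | rfl
  · exact ⟨by omega, .inl rfl⟩
  · exact ⟨by omega, .inr rfl⟩

theorem memBR'_cons_cons {a b k m x y : ℕ} {l : List ℕ} :
    memBR' a b k (m + 1) (x :: y :: l) ↔ BRStep a b k x y ∧ memBR' a b k m (y :: l) := by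
  unfold memBR' BRStep
  rw [List.pairwise_cons_cons_iff_of_trans, List.getLast?_cons_cons, List.forall_mem_cons,
    List.length_cons, Nat.add_right_cancel_iff]
  constructor
  · rintro ⟨⟨hyx, hsort⟩, hlen, ⟨hx, hrest⟩, hcount, hlast, hchain⟩
    obtain ⟨hstep, hchain⟩ := List.isChain_cons_cons.mp hchain
    refine ⟨⟨hx.1, hx.2, hyx, fun hxa => lt_of_le_of_ne hyx ?_, hstep⟩,
      hsort, hlen, hrest, fun z hz => ((List.sublist_cons_self x _).count_le z).trans
        (hcount z hz), hlast, hchain⟩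
    rintro rfl
    simpa using hcount y hxa
  · rintro ⟨⟨hx, hres, hyx, hxa, hstep⟩, hsort, hlen, hrest, hcount, hlast, hchain⟩
    refine ⟨⟨hyx, hsort⟩, hlen, ⟨⟨hx, hres⟩, hrest⟩, fun z hz => ?_, hlast,
      List.isChain_cons_cons.mpr ⟨hstep, hchain⟩⟩
    rw [List.count_cons]
    split_ifs with hzx
    · obtain rfl := beq_iff_eq.mp hzx
      have hlt : ∀ w ∈ y :: l, w < x := List.forall_mem_cons.mpr
        ⟨hxa hz, fun w hw => ((List.pairwise_cons.mp hsort).1 w hw).trans_lt (hxa hz)⟩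
      simp [List.count_eq_zero.mpr fun h => lt_irrefl x (hlt x h)]
    · simpa using hcount z hz

def boolWords : ℕ → Finset (List Bool)
  | 0 => {[]}
  | n + 1 => (Finset.univ ×ˢ boolWords n).image fun p => p.1 :: p.2

theorem mem_boolWords {n : ℕ} {w : List Bool} : w ∈ boolWords n ↔ w.length = n := by
  induction n generalizing w with
  | zero => simp [boolWords]
  | succ n ih => cases w <;> simp [boolWords, ih]

theorem sum_boolWords_succ {M : Type*} [AddCommMonoid M] (n : ℕ) (f : List Bool → M) :
    ∑ w ∈ boolWords (n + 1), f w = ∑ c : Bool, ∑ s ∈ boolWords n, f (c :: s) := by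
  rw [boolWords, Finset.sum_image (by simp), Finset.sum_product]

/-- A word over `{a, b}` (`true` for `a`) read from the largest part down; the part of letter `c`
is raised by `k` for each `a` from it to the end of the word. `brEncode s e` appends the smallest
part, `a` or `b` according to `e`, which is not counted. -/
def brBody (a b k : ℕ) : List Bool → List ℕ
  | [] => []
  | c :: s => (cond c a b + k * (c :: s).count true) :: brBody a b k s

def brEncode (a b k : ℕ) (s : List Bool) (e : Bool) : List ℕ :=
  brBody a b k s ++ [cond e a b]

theorem brEncode_cons (a b k : ℕ) (c : Bool) (s : List Bool) (e : Bool) :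
    brEncode a b k (c :: s) e = (cond c a b + k * (c :: s).count true) :: brEncode a b k s e :=
  rfl

theorem exists_brEncode_eq_cons (a b k : ℕ) (s : List Bool) (e : Bool) :
    ∃ l, brEncode a b k s e = (cond (s.headD e) a b + k * s.count true) :: l := by
  cases s with
  | nil => exact ⟨[], by simp [brEncode, brBody]⟩
  | cons c s => exact ⟨_, brEncode_cons a b k c s e⟩

theorem List.count_true_cons (c : Bool) (s : List Bool) :
    (c :: s).count true = s.count true + c.toNat := by
  cases c <;> simp

section Encoding

variable {a b k : ℕ}

theorem memBR'_brEncode (ha : 1 ≤ a) (hab : a < b) (hbk : b ≤ k) (s : List Bool) (e : Bool) :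
    memBR' a b k (s.length + 1) (brEncode a b k s e) := by
  induction s with
  | nil => exact (memBR'_singleton ha hab).mpr (by cases e <;> simp)
  | cons c s ih =>
    obtain ⟨l, hl⟩ := exists_brEncode_eq_cons a b k s e
    rw [brEncode_cons, hl, List.length_cons, memBR'_cons_cons, ← hl]
    refine ⟨?_, ih⟩
    rw [brStep_iff ha hab hbk]
    exact ⟨c, by rw [List.count_true_cons]⟩

theorem exists_brEncode_of_memBR' (ha : 1 ≤ a) (hab : a < b) (hbk : b ≤ k) {n : ℕ}
    {l : List ℕ} (h : memBR' a b k (n + 1) l) :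
    ∃ s e, s.length = n ∧ brEncode a b k s e = l := by
  induction n generalizing l with
  | zero =>
    obtain ⟨x, rfl⟩ := List.length_eq_one_iff.mp h.2.1
    rcases (memBR'_singleton ha hab).mp h with rfl | rfl
    · exact ⟨[], true, rfl, rfl⟩
    · exact ⟨[], false, rfl, rfl⟩
  | succ n ih =>
    obtain _ | ⟨x, _ | ⟨y, l⟩⟩ := l
    · simp [memBR'] at h
    · simp [memBR'] at h
    obtain ⟨hstep, hmem⟩ := memBR'_cons_cons.mp h
    obtain ⟨s, e, hs, he⟩ := ih hmem
    obtain ⟨l', hl'⟩ := exists_brEncode_eq_cons a b k s e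
    obtain ⟨rfl, -⟩ := List.cons.inj (he ▸ hl')
    obtain ⟨c, rfl⟩ := (brStep_iff ha hab hbk _ _).mp hstep
    exact ⟨c :: s, e, by simp [hs], by rw [brEncode_cons, he, List.count_true_cons]⟩

theorem map_brEncode (ha : 1 ≤ a) (hab : a < b) (hbk : b ≤ k) (s : List Bool) (e : Bool) :
    (brEncode a b k s e).map (fun x => decide (x % k = a % k)) = s ++ [e] := by
  induction s with
  | nil => cases e <;> simp [brEncode, brBody, (mod_ne_mod_of_lt ha hab hbk).symm]
  | cons c s ih => cases c <;> simp [brEncode_cons, ih, (mod_ne_mod_of_lt ha hab hbk).symm]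

theorem brEncode_injective (ha : 1 ≤ a) (hab : a < b) (hbk : b ≤ k) :
    Function.Injective fun p : List Bool × Bool => brEncode a b k p.1 p.2 := by
  rintro ⟨s, e⟩ ⟨s', e'⟩ h
  have := congrArg (List.map fun x => decide (x % k = a % k)) h
  simp only [map_brEncode ha hab hbk] at this
  obtain ⟨rfl, he⟩ := List.append_inj' this rfl
  rw [List.singleton_inj.mp he]

theorem setOf_memBR'_eq_image (ha : 1 ≤ a) (hab : a < b) (hbk : b ≤ k) (n : ℕ) :
    {l | memBR' a b k (n + 1) l} =
      ((boolWords n ×ˢ Finset.univ).image fun p => brEncode a b k p.1 p.2 : Set (List ℕ)) := by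
  ext l
  simp only [Set.mem_ofPred_eq, Finset.coe_image, Set.mem_image, Finset.mem_coe,
    Finset.mem_product, mem_boolWords, Finset.mem_univ, and_true, Prod.exists]
  constructor
  · exact exists_brEncode_of_memBR' ha hab hbk
  · rintro ⟨s, e, rfl, rfl⟩
    exact memBR'_brEncode ha hab hbk s e

end Encoding

section Weight

variable {R : Type*} [CommSemiring R] {a b k : ℕ}

def partitionWeight (k a b : ℕ) (u v q : R) (l : List ℕ) : R :=
  u ^ lcount k a l * v ^ lcount k b l * q ^ l.sum

theorem lcount_append (k c : ℕ) (l₁ l₂ : List ℕ) :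
    lcount k c (l₁ ++ l₂) = lcount k c l₁ + lcount k c l₂ := by
  simp [lcount]

theorem partitionWeight_append (u v q : R) (l₁ l₂ : List ℕ) :
    partitionWeight k a b u v q (l₁ ++ l₂) =
      partitionWeight k a b u v q l₁ * partitionWeight k a b u v q l₂ := by
  simp only [partitionWeight, lcount_append, List.sum_append, pow_add]
  ring

theorem partitionWeight_singleton (ha : 1 ≤ a) (hab : a < b) (hbk : b ≤ k) (u v q : R)
    {x : ℕ} (c : Bool) (hx : x % k = cond c a b % k) :
    partitionWeight k a b u v q [x] = cond c u v * q ^ x := by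
  have := mod_ne_mod_of_lt ha hab hbk
  cases c <;> simp_all [partitionWeight, lcount, Ne.symm]

theorem lcount_brBody (ha : 1 ≤ a) (hab : a < b) (hbk : b ≤ k) (s : List Bool) :
    lcount k a (brBody a b k s) = s.count true := by
  induction s with
  | nil => rfl
  | cons c s ih =>
    rw [brBody, ← List.singleton_append, lcount_append, ih, List.count_true_cons]
    cases c <;> simp [lcount, (mod_ne_mod_of_lt ha hab hbk).symm, add_comm]

theorem partitionWeight_brBody_cons (ha : 1 ≤ a) (hab : a < b) (hbk : b ≤ k) (u v q : R)
    (c : Bool) (s : List Bool) :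
    partitionWeight k a b u v q (brBody a b k (c :: s)) =
      cond c (u * q ^ a * q ^ k) (v * q ^ b) *
        partitionWeight k a b (u * q ^ k) v q (brBody a b k s) := by
  rw [brBody, ← List.singleton_append, partitionWeight_append,
    partitionWeight_singleton ha hab hbk u v q c (Nat.add_mul_mod_self_left ..)]
  simp only [partitionWeight, lcount_brBody ha hab hbk, List.count_true_cons, mul_pow, pow_add,
    pow_mul]
  cases c <;> simp <;> ring

theorem sum_partitionWeight_brBody (ha : 1 ≤ a) (hab : a < b) (hbk : b ≤ k) (n : ℕ)
    (u v q : R) :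
    ∑ s ∈ boolWords n, partitionWeight k a b u v q (brBody a b k s) =
      ∏ i ∈ Finset.range n, (v * q ^ b + u * q ^ a * (q ^ k) ^ (i + 1)) := by
  induction n generalizing u with
  | zero => simp [boolWords, brBody, partitionWeight, lcount]
  | succ n ih =>
    simp only [sum_boolWords_succ, partitionWeight_brBody_cons ha hab hbk, ← Finset.mul_sum, ih,
      Fintype.sum_bool, cond_true, cond_false, Finset.prod_range_succ' _ n, ← add_mul]
    rw [mul_comm]
    congr 1
    · exact Finset.prod_congr rfl fun i _ => by ring
    · ring

theorem sum_partitionWeight_brEncode (ha : 1 ≤ a) (hab : a < b) (hbk : b ≤ k) (n : ℕ)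
    (u v q : R) :
    ∑ p ∈ boolWords n ×ˢ Finset.univ, partitionWeight k a b u v q (brEncode a b k p.1 p.2) =
      ∏ i ∈ Finset.range (n + 1), (v * q ^ b + u * q ^ a * (q ^ k) ^ i) := by
  rw [Finset.sum_product, Finset.prod_range_succ', ← sum_partitionWeight_brBody ha hab hbk n,
    Finset.sum_mul]
  refine Finset.sum_congr rfl fun s _ => ?_
  simp only [brEncode, partitionWeight_append, Fintype.sum_bool, ← mul_add,
    partitionWeight_singleton ha hab hbk u v q _ rfl]
  simp [add_comm]

end Weight

section GaussianBinomial

variable {x : ℂ}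

theorem qPoch_succ (x : ℂ) (n : ℕ) : qPoch x x (n + 1) = qPoch x x n * (1 - x ^ (n + 1)) := by
  rw [qPoch, Finset.prod_range_succ, ← qPoch, ← pow_succ']

@[simp]
theorem qPoch_zero (t q : ℂ) : qPoch t q 0 = 1 := by
  simp [qPoch]

theorem one_sub_pow_ne_zero (hx : ¬IsOfFinOrder x) {j : ℕ} (hj : j ≠ 0) : 1 - x ^ j ≠ 0 :=
  sub_ne_zero.mpr fun h =>
    hx (isOfFinOrder_iff_pow_eq_one.mpr ⟨j, Nat.pos_of_ne_zero hj, h.symm⟩)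

theorem qPoch_ne_zero (hx : ¬IsOfFinOrder x) (n : ℕ) : qPoch x x n ≠ 0 := by
  induction n with
  | zero => simp
  | succ n ih => rw [qPoch_succ]; exact mul_ne_zero ih (one_sub_pow_ne_zero hx n.succ_ne_zero)

theorem gbinom_zero_right (hx : ¬IsOfFinOrder x) (n : ℕ) : gbinom x n 0 = 1 := by
  simp [gbinom, qPoch_ne_zero hx]

theorem gbinom_of_lt {n h : ℕ} (hnh : n < h) : gbinom x n h = 0 := by
  simp [gbinom, hnh.not_ge]

theorem gbinom_succ_succ (hx : ¬IsOfFinOrder x) (n h : ℕ) :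
    gbinom x (n + 1) (h + 1) = x ^ (h + 1) * gbinom x n (h + 1) + gbinom x n h := by
  rcases lt_trichotomy h n with hlt | rfl | hlt
  · obtain ⟨r, rfl⟩ := Nat.exists_eq_add_of_lt hlt
    simp only [gbinom, if_pos (show h + 1 ≤ h + r + 1 + 1 by omega),
      if_pos (show h + 1 ≤ h + r + 1 by omega), if_pos (show h ≤ h + r + 1 by omega),
      show h + r + 1 + 1 - (h + 1) = r + 1 by omega, show h + r + 1 - (h + 1) = r by omega,
      show h + r + 1 - h = r + 1 by omega]
    rw [qPoch_succ x (h + r + 1), qPoch_succ x h, qPoch_succ x r]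
    have := qPoch_ne_zero hx h
    have := qPoch_ne_zero hx r
    have := one_sub_pow_ne_zero hx (j := h + 1) (by omega)
    have := one_sub_pow_ne_zero hx (j := r + 1) (by omega)
    field_simp
    ring
  · simp [gbinom, qPoch_ne_zero hx]
  · rw [gbinom_of_lt (by omega), gbinom_of_lt hlt, gbinom_of_lt (by omega), mul_zero, add_zero]

theorem prod_range_add_mul_pow_eq_sum_gbinom (hx : ¬IsOfFinOrder x) (n : ℕ) (U V : ℂ) :
    ∏ i ∈ Finset.range n, (V + U * x ^ i) =
      ∑ h ∈ Finset.range (n + 1), U ^ h * V ^ (n - h) * x ^ h.choose 2 * gbinom x n h := by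
  induction n generalizing U with
  | zero => simp [gbinom_zero_right hx]
  | succ n ih =>
    set A : ℕ → ℂ := fun h => U ^ h * V ^ (n - h) * x ^ h.choose 2 * gbinom x n h with hA
    have hshift : ∏ i ∈ Finset.range n, (V + U * x ^ (i + 1)) =
        ∑ h ∈ Finset.range (n + 1), x ^ h * A h := by
      simp only [pow_succ', ← mul_assoc, ih, hA, mul_pow]
      exact Finset.sum_congr rfl fun h _ => by ring
    have hpascal : ∀ h ∈ Finset.range (n + 1),
        U ^ (h + 1) * V ^ (n + 1 - (h + 1)) * x ^ (h + 1).choose 2 * gbinom x (n + 1) (h + 1) =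
          V * (x ^ (h + 1) * A (h + 1)) + U * (x ^ h * A h) := by
      intro h hh
      have hchoose : (h + 1).choose 2 = h.choose 2 + h := by
        rw [Nat.choose_succ_succ', Nat.choose_one_right, add_comm]
      rw [gbinom_succ_succ hx, hA, hchoose]
      rcases (Nat.lt_succ_iff.mp (Finset.mem_range.mp hh)).lt_or_eq with hlt | rfl
      · obtain ⟨r, rfl⟩ := Nat.exists_eq_add_of_lt hlt
        simp only [show h + r + 1 + 1 - (h + 1) = r + 1 by omega,
          show h + r + 1 - (h + 1) = r by omega, show h + r + 1 - h = r + 1 by omega, hchoose]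
        ring
      · simp only [gbinom_of_lt (Nat.lt_succ_self h), Nat.sub_self]
        ring
    have htop : A (n + 1) = 0 := by simp [hA, gbinom_of_lt (Nat.lt_succ_self n)]
    have hsum : ∑ h ∈ Finset.range (n + 1), x ^ (h + 1) * A (h + 1) + A 0 =
        ∑ h ∈ Finset.range (n + 1), x ^ h * A h := by
      simpa [Finset.sum_range_succ, htop] using
        (Finset.sum_range_succ' (fun h => x ^ h * A h) (n + 1)).symm
    have hA0 : A 0 = V ^ n := by simp [hA, gbinom_zero_right hx]
    rw [Finset.prod_range_succ', hshift, Finset.sum_range_succ' _ (n + 1),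
      Finset.sum_congr rfl hpascal,
      Finset.sum_add_distrib, ← Finset.mul_sum, ← Finset.mul_sum]
    simp only [pow_zero, mul_one, one_mul, Nat.sub_zero, Nat.choose_zero_succ,
      gbinom_zero_right hx]
    linear_combination (-V) * hsum + V * hA0

end GaussianBinomial

/-- Generating function for the partitions in `BR'_{a,b,k}(m)`:
`Σ_{λ ∈ BR'_{a,b,k}(m)} u^{ℓ_a} v^{ℓ_b} q^{|λ|}
  = Σ_{h=0}^{m} u^h v^{m-h} q^{mb + k C(h,2) + (a-b)h} [m, h]_k`,
where the exponent `mb + (a-b)h` is written as `(m-h)b + ha ≥ 0`. -/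
theorem gen_BR'_m (a b k m : ℕ) (ha : 1 ≤ a) (hab : a < b) (hbk : b ≤ k)
    (hm : 1 ≤ m) (q u v : ℂ) (hq : ‖q‖ < 1) :
    ∑ᶠ l ∈ {l : List ℕ | memBR' a b k m l},
        u ^ lcount k a l * v ^ lcount k b l * q ^ l.sum
      = ∑ h ∈ Finset.range (m + 1), u ^ h * v ^ (m - h) *
          q ^ ((m - h) * b + a * h + k * Nat.choose h 2) * gbinom (q ^ k) m h := by
  obtain ⟨n, rfl⟩ := Nat.exists_eq_add_of_le' hm
  have hx : ¬IsOfFinOrder (q ^ k) := fun h =>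
    (pow_lt_one₀ (norm_nonneg q) hq (by omega)).ne (norm_pow q k ▸ h.norm_eq_one)
  rw [setOf_memBR'_eq_image ha hab hbk, finsum_mem_coe_finset,
    Finset.sum_image fun p _ p' _ h => brEncode_injective ha hab hbk h]
  refine (sum_partitionWeight_brEncode ha hab hbk n u v q).trans ?_
  rw [prod_range_add_mul_pow_eq_sum_gbinom hx]
  refine Finset.sum_congr rfl fun h _ => ?_
  simp only [mul_pow, ← pow_mul, pow_add]
  ring
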